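/- Vanishing tail integral of the nonlinearity along stretched-exponentially small values. Define k(λ) := −ψ(λ)/λ for λ > 0. Assume condition (H1) holds with exponent γ > 0. Then for any δ with 1/(2+γ) < δ < 1 and any constant c > 0, lim_{r→∞} ∫_r^∞ (1 − k(c e^{−s^δ})) ds = 0. -/

import Mathlib

open MeasureTheory Set Filter Topology

/-- The branching mechanism ψ(λ) = −λ + βλ² + ∫₀^∞ (e^{−λy} − 1 + λy) n(dy). -/
noncomputable def psi (β : ℝ) (n : Measure ℝ) (l : ℝ) : ℝ :=
  -l + β * l ^ 2 + ∫ y in Ioi (0 : ℝ), (Real.exp (-l * y) - 1 + l * y) ∂n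

/-- The normalized branching mechanism k(λ) := −ψ(λ)/λ for λ > 0. -/
noncomputable def kFun (β : ℝ) (n : Measure ℝ) (l : ℝ) : ℝ := -psi β n l / l

/-!
Since `e^{-x} - 1 + x ≤ min (x², x)` for `x ≥ 0`, the definition of `ψ` gives
`1 - k(λ) ≤ βλ + ∫ min (λy², y) n(dy)`. Taking `λ = c e^{-s^δ}` and exchanging the integrals,
it suffices that `I(y) = ∫₀^∞ min (c e^{-s^δ} y², y) ds` is `n`-integrable. For `y ≤ 1`,
`I(y) = O(y²)`. For `y > 1`, cutting the `s`-integral where `s^δ = 2 log⁺ (cy)` gives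
`I(y) = O(y (log y)^{1/δ} + y)`, and `1/δ < 2 + γ` makes this integrable by (H1).
A finite integral has vanishing tails.
-/

open scoped ENNReal
open Real

lemma tendsto_setLIntegral_Ioi_atTop_zero {μ : Measure ℝ} {f : ℝ → ℝ≥0∞} {a : ℝ}
    (h : ∫⁻ x in Ioi a, f x ∂μ ≠ ∞) :
    Tendsto (fun r => ∫⁻ x in Ioi r, f x ∂μ) atTop (𝓝 0) := by
  have hempty : ⋂ r : ℝ, Ioi r = ∅ := by
    ext x
    simpa using ⟨x, le_rfl⟩
  have := tendsto_measure_iInter_atTop (μ := μ.withDensity f) (s := Ioi)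
    (fun _ => measurableSet_Ioi.nullMeasurableSet) (fun _ _ h => Ioi_subset_Ioi h)
    ⟨a, by rwa [withDensity_apply _ measurableSet_Ioi]⟩
  simpa only [hempty, measure_empty, Function.comp_def,
    withDensity_apply _ measurableSet_Ioi] using this

lemma integrableOn_exp_neg_mul_rpow {b p : ℝ} (hb : 0 < b) (hp : 0 < p) :
    IntegrableOn (fun x : ℝ => exp (-b * x ^ p)) (Ioi 0) := by
  simpa using integrableOn_rpow_mul_exp_neg_mul_rpow (s := 0) neg_one_lt_zero hp hb

lemma exp_neg_sub_one_add_le_min {x : ℝ} (hx : 0 ≤ x) :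
    exp (-x) - 1 + x ≤ min (x ^ 2) x := by
  have hinv : exp (-x) * exp x = 1 := by rw [← exp_add, neg_add_cancel, exp_zero]
  have hmul : exp (-x) * (1 + x) ≤ 1 := by
    nlinarith [add_one_le_exp x, exp_pos (-x)]
  have hle_one : exp (-x) ≤ 1 := exp_le_one_iff.mpr (by linarith)
  exact le_min (by nlinarith [pow_nonneg hx 3]) (by linarith)

lemma mul_exp_neg_le_exp_neg_half {x t : ℝ} (hx : 0 < x) (ht : 2 * posLog x ≤ t) :
    x * exp (-t) ≤ exp (-(1 / 2) * t) := by
  calc x * exp (-t) ≤ exp (posLog x) * exp (-t) := by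
        gcongr
        calc x = exp (log x) := (exp_log hx).symm
          _ ≤ exp (posLog x) := exp_le_exp.mpr (le_max_right _ _)
    _ = exp (posLog x - t) := by rw [← exp_add, sub_eq_add_neg]
    _ ≤ exp (-(1 / 2) * t) := exp_le_exp.mpr (by linarith)

lemma rpow_add_mul_le_mul_one_add_rpow {a b u p q : ℝ} (ha : 0 ≤ a) (hb : 0 ≤ b) (hu : 0 ≤ u)
    (hp : 0 ≤ p) (hpq : p ≤ q) : (a + b * u) ^ p ≤ (a + b) ^ p * (1 + u ^ q) := by
  have hm : 1 ≤ max 1 u := le_max_left _ _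
  calc (a + b * u) ^ p ≤ ((a + b) * max 1 u) ^ p := by
        gcongr
        nlinarith [le_max_right 1 u]
    _ = (a + b) ^ p * max 1 u ^ p := mul_rpow (by positivity) (by positivity)
    _ ≤ (a + b) ^ p * max 1 u ^ q := by gcongr
    _ ≤ (a + b) ^ p * (1 + u ^ q) := by
        have := rpow_nonneg hu q
        gcongr
        rcases max_cases 1 u with ⟨h, _⟩ | ⟨h, _⟩ <;> rw [h]
        · rw [one_rpow]; linarith
        · linarith

lemma ofReal_one_sub_kFun_le (β : ℝ) (n : Measure ℝ) {l : ℝ} (hl : 0 < l) :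
    ENNReal.ofReal (1 - kFun β n l) ≤
      ENNReal.ofReal (β * l) + ∫⁻ y in Ioi 0, ENNReal.ofReal (min (l * y ^ 2) y) ∂n := by
  set f : ℝ → ℝ := fun y => exp (-l * y) - 1 + l * y with hf
  have hf_nonneg : ∀ y, 0 ≤ f y / l := fun y => by
    have := add_one_le_exp (-l * y)
    exact div_nonneg (by simp only [hf]; linarith) hl.le
  have hf_le : ∀ y ∈ Ioi (0 : ℝ), f y / l ≤ min (l * y ^ 2) y := fun y hy => by
    rw [div_le_iff₀ hl]
    calc f y = exp (-(l * y)) - 1 + l * y := by simp only [hf, neg_mul]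
      _ ≤ min ((l * y) ^ 2) (l * y) := exp_neg_sub_one_add_le_min (mul_nonneg hl.le (le_of_lt hy))
      _ = min (l * y ^ 2) y * l := by rw [min_mul_of_nonneg _ _ hl.le]; congr 1 <;> ring
  have hkey : 1 - kFun β n l = β * l + ∫ y in Ioi 0, f y / l ∂n := by
    rw [integral_div, kFun, psi, hf]
    field_simp
    ring
  calc ENNReal.ofReal (1 - kFun β n l)
      ≤ ENNReal.ofReal (β * l) + ENNReal.ofReal (∫ y in Ioi 0, f y / l ∂n) := by
        rw [hkey]; exact ENNReal.ofReal_add_le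
    _ ≤ ENNReal.ofReal (β * l) + ∫⁻ y in Ioi 0, ENNReal.ofReal (f y / l) ∂n := by
        rw [integral_eq_lintegral_of_nonneg_ae (ae_of_all _ hf_nonneg) (by fun_prop)]
        gcongr
        exact ENNReal.ofReal_toReal_le
    _ ≤ _ := by
        gcongr ENNReal.ofReal (β * l) + ?_
        exact setLIntegral_mono' measurableSet_Ioi fun y hy => ENNReal.ofReal_le_ofReal (hf_le y hy)

lemma setLIntegral_min_mul_exp_neg_rpow_le_sq {c y δ : ℝ} (hc : 0 ≤ c) :
    ∫⁻ s in Ioi 0, ENNReal.ofReal (min (c * exp (-s ^ δ) * y ^ 2) y) ≤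
      ENNReal.ofReal (c * y ^ 2) * ∫⁻ s in Ioi 0, ENNReal.ofReal (exp (-s ^ δ)) := by
  rw [← lintegral_const_mul' _ _ ENNReal.ofReal_ne_top]
  refine lintegral_mono fun s => ?_
  rw [← ENNReal.ofReal_mul (by positivity)]
  exact ENNReal.ofReal_le_ofReal ((min_le_left _ _).trans_eq (by ring))

lemma setLIntegral_min_mul_exp_neg_rpow_le {c y δ : ℝ} (hc : 0 < c) (hy : 0 < y) (hδ : 0 < δ) :
    ∫⁻ s in Ioi 0, ENNReal.ofReal (min (c * exp (-s ^ δ) * y ^ 2) y) ≤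
      ENNReal.ofReal y * (ENNReal.ofReal ((2 * posLog (c * y)) ^ δ⁻¹) +
        ∫⁻ s in Ioi 0, ENNReal.ofReal (exp (-(1 / 2) * s ^ δ))) := by
  set τ := (2 * posLog (c * y)) ^ δ⁻¹
  have hlog : 0 ≤ 2 * posLog (c * y) := by have := posLog_nonneg (x := c * y); positivity
  have hτ : 0 ≤ τ := rpow_nonneg hlog _
  have hτδ : τ ^ δ = 2 * posLog (c * y) := by
    rw [← rpow_mul hlog, inv_mul_cancel₀ hδ.ne', rpow_one]
  have hfar : ∀ s ∈ Ioi τ, ENNReal.ofReal (min (c * exp (-s ^ δ) * y ^ 2) y) ≤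
      ENNReal.ofReal y * ENNReal.ofReal (exp (-(1 / 2) * s ^ δ)) := fun s hs => by
    have hs' : 2 * posLog (c * y) ≤ s ^ δ := hτδ ▸ rpow_le_rpow hτ (le_of_lt hs) hδ.le
    rw [← ENNReal.ofReal_mul hy.le]
    refine ENNReal.ofReal_le_ofReal ?_
    calc min (c * exp (-s ^ δ) * y ^ 2) y ≤ y * (c * y * exp (-s ^ δ)) :=
          (min_le_left _ _).trans_eq (by ring)
      _ ≤ y * exp (-(1 / 2) * s ^ δ) := by
          gcongr
          exact mul_exp_neg_le_exp_neg_half (by positivity) hs'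
  rw [mul_add]
  refine (lintegral_mono_set (Ioc_union_Ioi_eq_Ioi hτ).ge).trans
    ((lintegral_union_le _ _ _).trans (add_le_add ?_ ?_))
  · calc ∫⁻ s in Ioc 0 τ, ENNReal.ofReal (min (c * exp (-s ^ δ) * y ^ 2) y)
        ≤ ∫⁻ s in Ioc 0 τ, ENNReal.ofReal y :=
          setLIntegral_mono' measurableSet_Ioc fun _ _ =>
            ENNReal.ofReal_le_ofReal (min_le_right _ _)
      _ = ENNReal.ofReal y * ENNReal.ofReal τ := by
          rw [setLIntegral_const, Real.volume_Ioc, sub_zero]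
  · calc ∫⁻ s in Ioi τ, ENNReal.ofReal (min (c * exp (-s ^ δ) * y ^ 2) y)
        ≤ ∫⁻ s in Ioi τ, ENNReal.ofReal y * ENNReal.ofReal (exp (-(1 / 2) * s ^ δ)) :=
          setLIntegral_mono' measurableSet_Ioi hfar
      _ ≤ ENNReal.ofReal y * ∫⁻ s in Ioi 0, ENNReal.ofReal (exp (-(1 / 2) * s ^ δ)) := by
          rw [lintegral_const_mul' _ _ ENNReal.ofReal_ne_top]
          gcongr

lemma lintegral_lintegral_min_mul_exp_neg_rpow_lt_top {n : Measure ℝ}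
    (hn : ∫⁻ y in Ioi 0, ENNReal.ofReal (min (y ^ 2) y) ∂n < ⊤) {q : ℝ}
    (hq : ∫⁻ y in Ioi 1, ENNReal.ofReal (y * log y ^ q) ∂n < ⊤) {δ : ℝ} (hδ : 0 < δ)
    (hδq : δ⁻¹ ≤ q) {c : ℝ} (hc : 0 < c) :
    ∫⁻ y in Ioi 0, (∫⁻ s in Ioi 0, ENNReal.ofReal (min (c * exp (-s ^ δ) * y ^ 2) y)) ∂n < ⊤ := by
  set K₁ := ∫⁻ s in Ioi 0, ENNReal.ofReal (exp (-s ^ δ))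
  set K₂ := ∫⁻ s in Ioi 0, ENNReal.ofReal (exp (-(1 / 2) * s ^ δ))
  have hK₁ : K₁ < ⊤ := by
    simpa using (integrableOn_exp_neg_mul_rpow one_pos hδ).lintegral_lt_top
  have hK₂ : K₂ < ⊤ := (integrableOn_exp_neg_mul_rpow (by norm_num) hδ).lintegral_lt_top
  set C := (2 * posLog c + 2) ^ δ⁻¹
  have hC : 0 ≤ C := rpow_nonneg (by have := posLog_nonneg (x := c); positivity) _
  have hsmall : ∀ y ∈ Ioc (0 : ℝ) 1,
      ∫⁻ s in Ioi 0, ENNReal.ofReal (min (c * exp (-s ^ δ) * y ^ 2) y) ≤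
        ENNReal.ofReal c * K₁ * ENNReal.ofReal (min (y ^ 2) y) := fun y hy => by
    have hmin : min (y ^ 2) y = y ^ 2 := min_eq_left (by nlinarith [hy.1, hy.2])
    rw [hmin, mul_right_comm, ← ENNReal.ofReal_mul hc.le]
    exact setLIntegral_min_mul_exp_neg_rpow_le_sq hc.le
  have hlarge : ∀ y ∈ Ioi (1 : ℝ),
      ∫⁻ s in Ioi 0, ENNReal.ofReal (min (c * exp (-s ^ δ) * y ^ 2) y) ≤
        ENNReal.ofReal C * ENNReal.ofReal (y * log y ^ q) +
          (ENNReal.ofReal C + K₂) * ENNReal.ofReal (min (y ^ 2) y) := fun y (hy : 1 < y) => by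
    have hlog : 0 ≤ log y := log_nonneg hy.le
    have hmin : min (y ^ 2) y = y := min_eq_right (by nlinarith)
    have hthreshold : (2 * posLog (c * y)) ^ δ⁻¹ ≤ C * (1 + log y ^ q) := by
      calc (2 * posLog (c * y)) ^ δ⁻¹ ≤ (2 * posLog c + 2 * log y) ^ δ⁻¹ := by
            have hmul := posLog_mul (x := c) (y := y)
            rw [posLog_eq_log (x := y) (hy.le.trans (le_abs_self y))] at hmul
            have := posLog_nonneg (x := c * y)
            gcongr
            linarith
        _ ≤ C * (1 + log y ^ q) :=
            rpow_add_mul_le_mul_one_add_rpow (by have := posLog_nonneg (x := c); positivity)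
              zero_le_two hlog (by positivity) hδq
    calc ∫⁻ s in Ioi 0, ENNReal.ofReal (min (c * exp (-s ^ δ) * y ^ 2) y)
        ≤ ENNReal.ofReal y * (ENNReal.ofReal ((2 * posLog (c * y)) ^ δ⁻¹) + K₂) :=
          setLIntegral_min_mul_exp_neg_rpow_le hc (by linarith) hδ
      _ ≤ ENNReal.ofReal y * (ENNReal.ofReal (C * (1 + log y ^ q)) + K₂) := by
          gcongr
      _ = ENNReal.ofReal C * ENNReal.ofReal (y * log y ^ q) +
          (ENNReal.ofReal C + K₂) * ENNReal.ofReal (min (y ^ 2) y) := by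
          rw [hmin, ENNReal.ofReal_mul hC, ENNReal.ofReal_mul (by linarith),
            ENNReal.ofReal_add zero_le_one (rpow_nonneg hlog q), ENNReal.ofReal_one]
          ring
  have hm : Measurable fun y : ℝ => ENNReal.ofReal (min (y ^ 2) y) := by fun_prop
  have hsmall_lt : ∫⁻ y in Ioc 0 1, ENNReal.ofReal (min (y ^ 2) y) ∂n < ⊤ :=
    (lintegral_mono_set Ioc_subset_Ioi_self).trans_lt hn
  have hlarge_lt : ∫⁻ y in Ioi 1, ENNReal.ofReal (min (y ^ 2) y) ∂n < ⊤ :=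
    (lintegral_mono_set (Ioi_subset_Ioi zero_le_one)).trans_lt hn
  calc ∫⁻ y in Ioi 0, (∫⁻ s in Ioi 0, ENNReal.ofReal (min (c * exp (-s ^ δ) * y ^ 2) y)) ∂n
      ≤ ∫⁻ y in Ioc 0 1, ENNReal.ofReal c * K₁ * ENNReal.ofReal (min (y ^ 2) y) ∂n +
          ∫⁻ y in Ioi 1, (ENNReal.ofReal C * ENNReal.ofReal (y * log y ^ q) +
            (ENNReal.ofReal C + K₂) * ENNReal.ofReal (min (y ^ 2) y)) ∂n :=
        (lintegral_mono_set (Ioc_union_Ioi_eq_Ioi zero_le_one).ge).trans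
          ((lintegral_union_le _ _ _).trans (add_le_add
            (setLIntegral_mono' (μ := n) measurableSet_Ioc hsmall)
            (setLIntegral_mono' (μ := n) measurableSet_Ioi hlarge)))
    _ = ENNReal.ofReal c * K₁ * ∫⁻ y in Ioc 0 1, ENNReal.ofReal (min (y ^ 2) y) ∂n +
          (ENNReal.ofReal C * ∫⁻ y in Ioi 1, ENNReal.ofReal (y * log y ^ q) ∂n +
            (ENNReal.ofReal C + K₂) * ∫⁻ y in Ioi 1, ENNReal.ofReal (min (y ^ 2) y) ∂n) := by
        rw [lintegral_add_right _ (hm.const_mul _), lintegral_const_mul _ hm,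
          lintegral_const_mul _ hm, lintegral_const_mul _ (by fun_prop)]
    _ < ⊤ := by finiteness

theorem tail_integral_vanishes
    (β : ℝ) (n : Measure ℝ) [SigmaFinite n]
    (hn : ∫⁻ y in Ioi (0 : ℝ), ENNReal.ofReal (min (y ^ 2) y) ∂n < ⊤)
    (γ : ℝ) (hγ : 0 < γ)
    (hH1 : ∫⁻ y in Ioi (1 : ℝ), ENNReal.ofReal (y * Real.log y ^ (2 + γ)) ∂n < ⊤)
    (δ : ℝ) (hδ₁ : 1 / (2 + γ) < δ) (c : ℝ) (hc : 0 < c) :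
    Tendsto (fun r : ℝ => ∫⁻ s in Ioi r,
        ENNReal.ofReal (1 - kFun β n (c * Real.exp (-s ^ δ)))) atTop (𝓝 0) := by
  have hδ : 0 < δ := lt_trans (by positivity) hδ₁
  have hδγ : δ⁻¹ ≤ 2 + γ := by
    rw [one_div] at hδ₁
    exact (inv_le_comm₀ (by positivity) hδ).mp hδ₁.le
  have hdrift : ∫⁻ s in Ioi 0, ENNReal.ofReal (β * (c * exp (-s ^ δ))) < ⊤ := by
    simpa [mul_assoc] using
      ((integrableOn_exp_neg_mul_rpow one_pos hδ).const_mul (β * c)).lintegral_lt_top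
  refine tendsto_setLIntegral_Ioi_atTop_zero (a := 0) (ne_of_lt ?_)
  calc ∫⁻ s in Ioi 0, ENNReal.ofReal (1 - kFun β n (c * exp (-s ^ δ)))
      ≤ ∫⁻ s in Ioi 0, (ENNReal.ofReal (β * (c * exp (-s ^ δ))) +
          ∫⁻ y in Ioi 0, ENNReal.ofReal (min (c * exp (-s ^ δ) * y ^ 2) y) ∂n) :=
        lintegral_mono fun s => ofReal_one_sub_kFun_le β n (by positivity)
    _ = (∫⁻ s in Ioi 0, ENNReal.ofReal (β * (c * exp (-s ^ δ)))) +
          ∫⁻ y in Ioi 0, (∫⁻ s in Ioi 0, ENNReal.ofReal (min (c * exp (-s ^ δ) * y ^ 2) y)) ∂n := by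
        rw [lintegral_add_left (by fun_prop), lintegral_lintegral_swap (by fun_prop)]
    _ < ⊤ := ENNReal.add_lt_top.2
        ⟨hdrift, lintegral_lintegral_min_mul_exp_neg_rpow_lt_top hn hH1 hδ hδγ hc⟩
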